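/- arXiv:2604.14355 — 4 statements merged into one kernel-verified Lean document; each statement's English description precedes it below -/
import Mathlib

section
/- If configuration c0 steps to c1 by applying reaction r1 = (a1, p1), and c1 steps to c2 by applying reaction r2 = (a2, p2), and no species is both a product of r1 (p1(λ) > 0) and a reactant of r2 (a2(λ) > 0), then there exists a configuration c1' such that c0 steps to c1' by applying r2 and c1' steps to c2 by applying r1. -/
/-- reaction-swap lemma. -/
theorem reaction_swap {Λ : Type*} (a1 p1 a2 p2 c0 c1 c2 : Λ → ℕ)
    (h1app : ∀ l, a1 l ≤ c0 l) (h1 : c1 = fun l => c0 l - a1 l + p1 l)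
    (h2app : ∀ l, a2 l ≤ c1 l) (h2 : c2 = fun l => c1 l - a2 l + p2 l)
    (hdisj : ∀ l, 0 < p1 l → a2 l = 0) :
    ∃ c1' : Λ → ℕ,
      (∀ l, a2 l ≤ c0 l) ∧ c1' = (fun l => c0 l - a2 l + p2 l) ∧
      (∀ l, a1 l ≤ c1' l) ∧ c2 = (fun l => c1' l - a1 l + p1 l) := by
  subst h1 h2
  refine ⟨_, ?_, rfl, ?_, ?_⟩
  · intro l
    have h := h2app l; have hd := hdisj l; have ha := h1app l
    simp only at h; omega
  · intro l
    have h := h2app l; have hd := hdisj l; have ha := h1app l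
    simp only at h; omega
  · funext l
    have h := h2app l; have hd := hdisj l; have ha := h1app l
    simp only at h ⊢; omega
end

section
/- For the mod-set CRD (reactions X_i → Y_{w_i mod m} and Y_p + Y_q → Y_{(p+q) mod m}), from any configuration c with total molecule count at least 1, a configuration o is reachable by forward reactions alone in which no X_i is present and exactly one Y-molecule is present (i.e., Σ_p o(Y_p) = 1 and o(X_i) = 0 for all i). -/
section
variable (k m : ℕ) [NeZero m]

/-- Species: `Sum.inl i` is the input species `Xᵢ`; `Sum.inr p` is the voter `Y_p`. -/
abbrev Sp (k m : ℕ) := Fin k ⊕ ZMod m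

def single (s : Sp k m) : Sp k m → ℕ := fun t => if t = s then 1 else 0

/-- Reactions of the mod-set CRD: `Xᵢ → Y_{wᵢ mod m}` and `Y_p + Y_q → Y_{p+q mod m}`. -/
def R (w : Fin k → ℤ) : Set ((Sp k m → ℕ) × (Sp k m → ℕ)) :=
  (⋃ i : Fin k, {(single k m (Sum.inl i), single k m (Sum.inr ((w i : ZMod m))))}) ∪
  (⋃ p : ZMod m, ⋃ q : ZMod m,
    {(fun t => single k m (Sum.inr p) t + single k m (Sum.inr q) t,
      single k m (Sum.inr (p + q)))})

def Step (R : Set ((Sp k m → ℕ) × (Sp k m → ℕ))) (x y : Sp k m → ℕ) : Prop :=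
  ∃ r ∈ R, (∀ l, r.1 l ≤ x l) ∧ y = fun l => x l - r.1 l + r.2 l

lemma stepX (w : Fin k → ℤ) (c : Sp k m → ℕ) (i : Fin k) (h : 1 ≤ c (Sum.inl i)) :
    Step k m (R k m w) c
      (fun l => c l - single k m (Sum.inl i) l + single k m (Sum.inr ((w i : ZMod m))) l) := by
  refine ⟨(single k m (Sum.inl i), single k m (Sum.inr ((w i : ZMod m)))),
    Or.inl (Set.mem_iUnion.mpr ⟨i, rfl⟩), ?_, rfl⟩
  intro l
  by_cases hl : l = Sum.inl i <;> simp [single, hl, h]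

lemma stepY (w : Fin k → ℤ) (c : Sp k m → ℕ) (p q : ZMod m)
    (h : ∀ l, single k m (Sum.inr p) l + single k m (Sum.inr q) l ≤ c l) :
    Step k m (R k m w) c
      (fun l => c l - (single k m (Sum.inr p) l + single k m (Sum.inr q) l)
        + single k m (Sum.inr (p + q)) l) := by
  refine ⟨(fun t => single k m (Sum.inr p) t + single k m (Sum.inr q) t,
    single k m (Sum.inr (p + q))),
    Or.inr (Set.mem_iUnion.mpr ⟨p, Set.mem_iUnion.mpr ⟨q, rfl⟩⟩), h, rfl⟩

/-- from any configuration with at least one molecule, forward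
reactions alone can reach a configuration with no `X` and exactly one `Y`. -/
theorem mod_converges (hk : 1 ≤ k) (hm : 1 ≤ m) (w : Fin k → ℤ)
    (c : Sp k m → ℕ) (hc : 1 ≤ ∑ s : Sp k m, c s) :
    ∃ o : Sp k m → ℕ, Relation.ReflTransGen (Step k m (R k m w)) c o ∧
      (∀ i : Fin k, o (Sum.inl i) = 0) ∧ (∑ p : ZMod m, o (Sum.inr p)) = 1 := by
  have total : ∀ d : Sp k m → ℕ,
      ∑ s : Sp k m, d s = (∑ i : Fin k, d (Sum.inl i)) + (∑ p : ZMod m, d (Sum.inr p)) :=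
    fun d => Fintype.sum_sum_type d
  suffices H : ∀ n (c : Sp k m → ℕ),
      2 * (∑ i : Fin k, c (Sum.inl i)) + (∑ p : ZMod m, c (Sum.inr p)) ≤ n →
      1 ≤ (∑ i : Fin k, c (Sum.inl i)) + (∑ p : ZMod m, c (Sum.inr p)) →
      ∃ o : Sp k m → ℕ, Relation.ReflTransGen (Step k m (R k m w)) c o ∧
        (∀ i : Fin k, o (Sum.inl i) = 0) ∧ (∑ p : ZMod m, o (Sum.inr p)) = 1 by
    exact H _ c le_rfl (by rw [total] at hc; exact hc)
  intro n
  induction n with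
  | zero =>
    intro c hle h1; omega
  | succ n ih =>
    intro c hle h1
    by_cases hA : ∃ i : Fin k, 1 ≤ c (Sum.inl i)
    · obtain ⟨i, hi⟩ := hA
      set c' : Sp k m → ℕ :=
        fun l => c l - single k m (Sum.inl i) l + single k m (Sum.inr ((w i : ZMod m))) l with hc'
      have hstep := stepX k m w c i hi
      have hAsum : (∑ j : Fin k, c' (Sum.inl j)) + 1 = ∑ j : Fin k, c (Sum.inl j) := by
        have : ∀ j : Fin k, c' (Sum.inl j) = c (Sum.inl j) - (if j = i then 1 else 0) := by
          intro j; simp only [hc', single]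
          by_cases hj : j = i <;> simp [hj]
        rw [Finset.sum_congr rfl (fun j _ => this j)]
        have h2 : ∀ j : Fin k,
            (c (Sum.inl j) - (if j = i then 1 else 0)) + (if j = i then 1 else 0)
              = c (Sum.inl j) := by
          intro j; by_cases hj : j = i <;> simp [hj] <;> omega
        calc (∑ j : Fin k, (c (Sum.inl j) - (if j = i then 1 else 0))) + 1
            = ∑ j : Fin k, ((c (Sum.inl j) - (if j = i then 1 else 0)) + (if j = i then 1 else 0)) := by
              rw [Finset.sum_add_distrib, Finset.sum_ite_eq' Finset.univ i (fun _ => 1)]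
              simp
          _ = ∑ j : Fin k, c (Sum.inl j) := Finset.sum_congr rfl (fun j _ => h2 j)
      have hBsum : (∑ p : ZMod m, c' (Sum.inr p)) = (∑ p : ZMod m, c (Sum.inr p)) + 1 := by
        have : ∀ p : ZMod m, c' (Sum.inr p)
            = c (Sum.inr p) + (if p = (w i : ZMod m) then 1 else 0) := by
          intro p; simp only [hc', single]
          by_cases hp : p = (w i : ZMod m) <;> simp [hp]
        rw [Finset.sum_congr rfl (fun p _ => this p), Finset.sum_add_distrib,
          Finset.sum_ite_eq' Finset.univ ((w i : ZMod m)) (fun _ => 1)]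
        simp
      obtain ⟨o, ho, ho1, ho2⟩ := ih c' (by omega) (by omega)
      exact ⟨o, Relation.ReflTransGen.head hstep ho, ho1, ho2⟩
    · push_neg at hA
      have hA0 : ∀ i : Fin k, c (Sum.inl i) = 0 := fun i => by have := hA i; omega
      have hAz : (∑ i : Fin k, c (Sum.inl i)) = 0 :=
        Finset.sum_eq_zero (fun i _ => hA0 i)
      by_cases hB : 2 ≤ ∑ p : ZMod m, c (Sum.inr p)
      · -- find p with c (inr p) ≥ 1
        have hp : ∃ p : ZMod m, 1 ≤ c (Sum.inr p) := by
          by_contra h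
          push_neg at h
          have : (∑ p : ZMod m, c (Sum.inr p)) = 0 :=
            Finset.sum_eq_zero (fun p _ => by have := h p; omega)
          omega
        obtain ⟨p, hp⟩ := hp
        set c1 : Sp k m → ℕ := fun l => c l - single k m (Sum.inr p) l with hc1
        have hB1 : (∑ r : ZMod m, c1 (Sum.inr r)) + 1 = ∑ r : ZMod m, c (Sum.inr r) := by
          have : ∀ r : ZMod m, c1 (Sum.inr r) = c (Sum.inr r) - (if r = p then 1 else 0) := by
            intro r; simp only [hc1, single]
            by_cases hr : r = p <;> simp [hr]
          rw [Finset.sum_congr rfl (fun r _ => this r)]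
          have h2 : ∀ r : ZMod m,
              (c (Sum.inr r) - (if r = p then 1 else 0)) + (if r = p then 1 else 0)
                = c (Sum.inr r) := by
            intro r; by_cases hr : r = p <;> simp [hr] <;> omega
          calc (∑ r : ZMod m, (c (Sum.inr r) - (if r = p then 1 else 0))) + 1
              = ∑ r : ZMod m, ((c (Sum.inr r) - (if r = p then 1 else 0)) + (if r = p then 1 else 0)) := by
                rw [Finset.sum_add_distrib, Finset.sum_ite_eq' Finset.univ p (fun _ => 1)]
                simp
            _ = ∑ r : ZMod m, c (Sum.inr r) := Finset.sum_congr rfl (fun r _ => h2 r)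
        have hq : ∃ q : ZMod m, 1 ≤ c1 (Sum.inr q) := by
          by_contra h
          push_neg at h
          have : (∑ r : ZMod m, c1 (Sum.inr r)) = 0 :=
            Finset.sum_eq_zero (fun r _ => by have := h r; omega)
          omega
        obtain ⟨q, hq⟩ := hq
        have hreact : ∀ l, single k m (Sum.inr p) l + single k m (Sum.inr q) l ≤ c l := by
          intro l
          have h1' : single k m (Sum.inr q) l ≤ c1 l := by
            simp only [single]
            by_cases hl : l = Sum.inr q
            · rw [hl]; simpa using hq
            · simp [hl]
          have h2' : single k m (Sum.inr p) l + c1 l = c l := by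
            simp only [hc1, single]
            by_cases hl : l = Sum.inr p
            · rw [hl]; simp; omega
            · simp [hl]
          omega
        set c' : Sp k m → ℕ :=
          fun l => c l - (single k m (Sum.inr p) l + single k m (Sum.inr q) l)
            + single k m (Sum.inr (p + q)) l with hc'
        have hstep := stepY k m w c p q hreact
        have hA' : ∀ j : Fin k, c' (Sum.inl j) = c (Sum.inl j) := by
          intro j; simp [hc', single]
        have hA'z : (∑ j : Fin k, c' (Sum.inl j)) = 0 := by
          rw [Finset.sum_congr rfl (fun j _ => hA' j)]; exact hAz
        have hB' : (∑ r : ZMod m, c' (Sum.inr r)) + 1 = ∑ r : ZMod m, c (Sum.inr r) := by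
          have hform : ∀ r : ZMod m, c' (Sum.inr r)
              = (c (Sum.inr r) - ((if r = p then 1 else 0) + (if r = q then 1 else 0)))
                + (if r = p + q then 1 else 0) := by
            intro r; simp only [hc', single, Sum.inr.injEq]
          have hsub : ∀ r : ZMod m,
              (c (Sum.inr r) - ((if r = p then 1 else 0) + (if r = q then 1 else 0)))
                + ((if r = p then 1 else 0) + (if r = q then 1 else 0)) = c (Sum.inr r) := by
            intro r
            have := hreact (Sum.inr r)
            simp only [single, Sum.inr.injEq] at this
            omega
          calc (∑ r : ZMod m, c' (Sum.inr r)) + 1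
              = (∑ r : ZMod m,
                  ((c (Sum.inr r) - ((if r = p then 1 else 0) + (if r = q then 1 else 0)))
                    + (if r = p + q then 1 else 0))) + 1 := by
                rw [Finset.sum_congr rfl (fun r _ => hform r)]
            _ = (∑ r : ZMod m,
                  (c (Sum.inr r) - ((if r = p then 1 else 0) + (if r = q then 1 else 0)))) + 2 := by
                rw [Finset.sum_add_distrib, Finset.sum_ite_eq' Finset.univ (p + q) (fun _ => 1)]
                simp
            _ = ∑ r : ZMod m, c (Sum.inr r) := by
                have : (∑ r : ZMod m,
                    (c (Sum.inr r) - ((if r = p then 1 else 0) + (if r = q then 1 else 0))))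
                      + (∑ r : ZMod m, ((if r = p then 1 else 0) + (if r = q then 1 else 0)))
                    = ∑ r : ZMod m, c (Sum.inr r) := by
                  rw [← Finset.sum_add_distrib]
                  exact Finset.sum_congr rfl (fun r _ => hsub r)
                have hsum2 : (∑ r : ZMod m,
                    ((if r = p then 1 else 0) + (if r = q then 1 else 0))) = 2 := by
                  rw [Finset.sum_add_distrib, Finset.sum_ite_eq' Finset.univ p (fun _ => 1),
                    Finset.sum_ite_eq' Finset.univ q (fun _ => 1)]
                  simp
                omega
        obtain ⟨o, ho, ho1, ho2⟩ := ih c' (by omega) (by omega)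
        exact ⟨o, Relation.ReflTransGen.head hstep ho, ho1, ho2⟩
      · refine ⟨c, Relation.ReflTransGen.refl, hA0, ?_⟩
        omega

end
end

section
/- The mod-set CRD reverse-robustly decides the set M = {(x₁,...,x_k) : Σ w_i·x_i ≡ c (mod m)}: for every valid initial configuration i (containing only X-species) and every configuration d bireachable from i, there is a configuration o forward-reachable from d with exactly one Y-molecule Y_{p*} present, no X-molecules, p* ≡ Σ w_i·i(X_i) (mod m), and o is stable (no configuration forward-reachable from o changes the unique Y-species present). -/
section
variable (k m : ℕ) [NeZero m]

def BiStep (R : Set ((Sp k m → ℕ) × (Sp k m → ℕ))) (x y : Sp k m → ℕ) : Prop :=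
  ∃ r ∈ R, ((∀ l, r.1 l ≤ x l) ∧ y = fun l => x l - r.1 l + r.2 l) ∨
           ((∀ l, r.2 l ≤ x l) ∧ y = fun l => x l - r.2 l + r.1 l)

/- ## auxiliary -/

lemma mem_R_iff (w : Fin k → ℤ) (r : (Sp k m → ℕ) × (Sp k m → ℕ)) :
    r ∈ R k m w ↔
      (∃ i : Fin k, r = (single k m (Sum.inl i), single k m (Sum.inr ((w i : ZMod m))))) ∨
      (∃ p q : ZMod m, r = (fun t => single k m (Sum.inr p) t + single k m (Sum.inr q) t,
        single k m (Sum.inr (p + q)))) := by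
  simp only [R, Set.mem_union, Set.mem_iUnion, Set.mem_singleton_iff]

def valC (w : Fin k → ℤ) (x : Sp k m → ℕ) : ZMod m :=
  ∑ j : Fin k, (w j : ZMod m) * (x (Sum.inl j) : ZMod m)
    + ∑ p : ZMod m, p * (x (Sum.inr p) : ZMod m)

lemma valC_add (w : Fin k → ℤ) (a b : Sp k m → ℕ) :
    valC k m w (fun l => a l + b l) = valC k m w a + valC k m w b := by
  simp only [valC, Nat.cast_add, mul_add, Finset.sum_add_distrib]
  ring

lemma valC_single_inl (w : Fin k → ℤ) (i : Fin k) :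
    valC k m w (single k m (Sum.inl i)) = (w i : ZMod m) := by
  simp [valC, single, Finset.sum_ite_eq']

lemma valC_single_inr (w : Fin k → ℤ) (p : ZMod m) :
    valC k m w (single k m (Sum.inr p)) = p := by
  simp [valC, single, Finset.sum_ite_eq']

lemma valC_reaction (w : Fin k → ℤ) {r} (hr : r ∈ R k m w) :
    valC k m w r.1 = valC k m w r.2 := by
  rcases (mem_R_iff k m w r).mp hr with ⟨i, rfl⟩ | ⟨p, q, rfl⟩
  · simp [valC_single_inl, valC_single_inr]
  · simp [valC_add, valC_single_inr]

lemma valC_update (w : Fin k → ℤ) (x a b : Sp k m → ℕ) (hle : ∀ l, a l ≤ x l) :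
    valC k m w (fun l => x l - a l + b l)
      = valC k m w x - valC k m w a + valC k m w b := by
  have h1 : valC k m w x = valC k m w (fun l => x l - a l) + valC k m w a := by
    rw [← valC_add]
    congr 1
    funext l
    exact (Nat.sub_add_cancel (hle l)).symm
  have h2 : valC k m w (fun l => x l - a l + b l)
      = valC k m w (fun l => x l - a l) + valC k m w b := valC_add k m w _ _
  rw [h2, h1]; ring

lemma step_valC (w : Fin k → ℤ) {x y} (h : Step k m (R k m w) x y) :
    valC k m w y = valC k m w x := by
  obtain ⟨r, hr, hle, rfl⟩ := h
  rw [valC_update k m w x r.1 r.2 hle, valC_reaction k m w hr]; ring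

lemma bistep_valC (w : Fin k → ℤ) {x y} (h : BiStep k m (R k m w) x y) :
    valC k m w y = valC k m w x := by
  obtain ⟨r, hr, ⟨hle, rfl⟩ | ⟨hle, rfl⟩⟩ := h
  · rw [valC_update k m w x r.1 r.2 hle, valC_reaction k m w hr]; ring
  · rw [valC_update k m w x r.2 r.1 hle, valC_reaction k m w hr]; ring

def tot (x : Sp k m → ℕ) : ℕ := ∑ l : Sp k m, x l

lemma tot_single (s : Sp k m) : tot k m (single k m s) = 1 := by
  simp [tot, single, Finset.sum_ite_eq']

lemma tot_update (x a b : Sp k m → ℕ) (hle : ∀ l, a l ≤ x l) :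
    tot k m (fun l => x l - a l + b l) + tot k m a = tot k m x + tot k m b := by
  simp only [tot, ← Finset.sum_add_distrib]
  refine Finset.sum_congr rfl fun l _ => ?_
  have := hle l
  omega

lemma tot_r2 (w : Fin k → ℤ) {r} (hr : r ∈ R k m w) : tot k m r.2 = 1 := by
  rcases (mem_R_iff k m w r).mp hr with ⟨i, rfl⟩ | ⟨p, q, rfl⟩ <;> simp [tot_single]

lemma tot_r1_le (w : Fin k → ℤ) {r} (hr : r ∈ R k m w) : 1 ≤ tot k m r.1 := by
  rcases (mem_R_iff k m w r).mp hr with ⟨i, rfl⟩ | ⟨p, q, rfl⟩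
  · simp [tot_single]
  · show 1 ≤ tot k m fun t => single k m (Sum.inr p) t + single k m (Sum.inr q) t
    have : tot k m (fun t => single k m (Sum.inr p) t + single k m (Sum.inr q) t)
        = tot k m (single k m (Sum.inr p)) + tot k m (single k m (Sum.inr q)) := by
      simp [tot, Finset.sum_add_distrib]
    rw [this, tot_single, tot_single]
    omega

lemma tot_le (x a : Sp k m → ℕ) (hle : ∀ l, a l ≤ x l) : tot k m a ≤ tot k m x :=
  Finset.sum_le_sum fun l _ => hle l

lemma bistep_tot (w : Fin k → ℤ) {x y} (h : BiStep k m (R k m w) x y)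
    (hx : 1 ≤ tot k m x) : 1 ≤ tot k m y := by
  obtain ⟨r, hr, ⟨hle, rfl⟩ | ⟨hle, rfl⟩⟩ := h
  · have h1 := tot_update k m x r.1 r.2 hle
    have h2 := tot_le k m x r.1 hle
    have h3 := tot_r2 k m w hr
    omega
  · have h1 := tot_update k m x r.2 r.1 hle
    have h2 := tot_r1_le k m w hr
    have h3 := tot_r2 k m w hr
    omega

lemma clearX (w : Fin k → ℤ) : ∀ (n : ℕ) (x : Sp k m → ℕ), (∑ j : Fin k, x (Sum.inl j)) = n →
    ∃ o, Relation.ReflTransGen (Step k m (R k m w)) x o ∧ (∀ j, o (Sum.inl j) = 0)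
      ∧ valC k m w o = valC k m w x ∧ tot k m o = tot k m x := by
  intro n
  induction n with
  | zero =>
    intro x hx
    exact ⟨x, Relation.ReflTransGen.refl,
      fun j => (Finset.sum_eq_zero_iff.mp hx) j (Finset.mem_univ j), rfl, rfl⟩
  | succ n ih =>
    intro x hx
    obtain ⟨j, hj⟩ : ∃ j, 1 ≤ x (Sum.inl j) := by
      by_contra hc
      push_neg at hc
      have : (∑ j : Fin k, x (Sum.inl j)) = 0 :=
        Finset.sum_eq_zero fun j _ => by have := hc j; omega
      omega
    set r : (Sp k m → ℕ) × (Sp k m → ℕ) :=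
      (single k m (Sum.inl j), single k m (Sum.inr ((w j : ZMod m)))) with hrdef
    have hr : r ∈ R k m w := (mem_R_iff k m w r).mpr (Or.inl ⟨j, rfl⟩)
    have hle : ∀ l, r.1 l ≤ x l := by
      intro l
      simp only [hrdef, single]
      split
      · next h => subst h; exact hj
      · omega
    set y : Sp k m → ℕ := fun l => x l - r.1 l + r.2 l with hydef
    have hstep : Step k m (R k m w) x y := ⟨r, hr, hle, rfl⟩
    have hXy : (∑ j' : Fin k, y (Sum.inl j')) = n := by
      have hpt : ∀ j' : Fin k, y (Sum.inl j') + (if j' = j then 1 else 0) = x (Sum.inl j') := by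
        intro j'
        simp only [hydef, hrdef, single]
        by_cases h : j' = j
        · subst h; simp; omega
        · simp [h, Sum.inl.injEq]
      have hs : (∑ j' : Fin k, y (Sum.inl j')) + (∑ j' : Fin k, if j' = j then 1 else 0)
          = ∑ j' : Fin k, x (Sum.inl j') := by
        rw [← Finset.sum_add_distrib]
        exact Finset.sum_congr rfl fun j' _ => hpt j'
      have hone : (∑ j' : Fin k, if j' = j then (1:ℕ) else 0) = 1 := by simp
      omega
    obtain ⟨o, ho1, ho2, ho3, ho4⟩ := ih y hXy
    refine ⟨o, Relation.ReflTransGen.head hstep ho1, ho2, ?_, ?_⟩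
    · rw [ho3, step_valC k m w hstep]
    · rw [ho4]
      have h1 : tot k m y + tot k m r.1 = tot k m x + tot k m r.2 :=
        tot_update k m x r.1 r.2 hle
      have h2 : tot k m r.1 = 1 := tot_single k m _
      have h3 : tot k m r.2 = 1 := tot_single k m _
      omega

lemma mergeY (w : Fin k → ℤ) (n : ℕ) : ∀ (x : Sp k m → ℕ), tot k m x = n → 1 ≤ n →
    (∀ j, x (Sum.inl j) = 0) →
    ∃ o, Relation.ReflTransGen (Step k m (R k m w)) x o ∧ (∀ j, o (Sum.inl j) = 0)
      ∧ valC k m w o = valC k m w x ∧ tot k m o = 1 := by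
  induction n using Nat.strong_induction_on with
  | _ n ih =>
    intro x hx hn hX
    rcases eq_or_lt_of_le hn with h1 | h2
    · exact ⟨x, Relation.ReflTransGen.refl, hX, rfl, by omega⟩
    · have htotsum : tot k m x = (∑ j : Fin k, x (Sum.inl j)) + ∑ p : ZMod m, x (Sum.inr p) :=
        Fintype.sum_sum_type x
      have hY : 2 ≤ ∑ p : ZMod m, x (Sum.inr p) := by
        have hz : (∑ j : Fin k, x (Sum.inl j)) = 0 :=
          Finset.sum_eq_zero fun j _ => hX j
        omega
      obtain ⟨p, hp⟩ : ∃ p, 1 ≤ x (Sum.inr p) := by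
        by_contra hc
        push_neg at hc
        have : (∑ p : ZMod m, x (Sum.inr p)) = 0 :=
          Finset.sum_eq_zero fun p _ => by have := hc p; omega
        omega
      obtain ⟨q, hq⟩ : ∃ q, 1 ≤ x (Sum.inr q) - (if q = p then 1 else 0) := by
        by_contra hc
        push_neg at hc
        have hb : ∀ q, x (Sum.inr q) ≤ (if q = p then 1 else 0) := by
          intro q; have := hc q; split at this <;> split <;> omega
        have : (∑ p' : ZMod m, x (Sum.inr p')) ≤ ∑ p' : ZMod m, (if p' = p then 1 else 0) :=
          Finset.sum_le_sum fun p' _ => hb p'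
        rw [Finset.sum_ite_eq' Finset.univ p (fun _ => 1)] at this
        simp at this
        omega
      set r : (Sp k m → ℕ) × (Sp k m → ℕ) :=
        (fun t => single k m (Sum.inr p) t + single k m (Sum.inr q) t,
          single k m (Sum.inr (p + q))) with hrdef
      have hr : r ∈ R k m w := (mem_R_iff k m w r).mpr (Or.inr ⟨p, q, rfl⟩)
      have hle : ∀ l, r.1 l ≤ x l := by
        intro l
        rcases l with j | t
        · simp [hrdef, single]
        · show (single k m (Sum.inr p) (Sum.inr t)) + (single k m (Sum.inr q) (Sum.inr t))
              ≤ x (Sum.inr t)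
          simp only [single, Sum.inr.injEq]
          split_ifs with h1 h2 h2
          · subst h1; subst h2; simp at hq; omega
          · subst h1; omega
          · subst h2; rw [if_neg (fun hh => h1 hh)] at hq; omega
          · omega
      set y : Sp k m → ℕ := fun l => x l - r.1 l + r.2 l with hydef
      have hstep : Step k m (R k m w) x y := ⟨r, hr, hle, rfl⟩
      have htoty : tot k m y = n - 1 := by
        have h1 := tot_update k m x r.1 r.2 hle
        have h2 : tot k m r.1 = 2 := by
          have : tot k m r.1
              = tot k m (single k m (Sum.inr p)) + tot k m (single k m (Sum.inr q)) := by
            simp [hrdef, tot, Finset.sum_add_distrib]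
          rw [this, tot_single, tot_single]
        have h1' : tot k m y + tot k m r.1 = tot k m x + tot k m r.2 := h1
        have h3 : tot k m r.2 = 1 := tot_single k m _
        omega
      have hXy : ∀ j, y (Sum.inl j) = 0 := by
        intro j
        simp [hydef, hrdef, single, hX j]
      obtain ⟨o, ho1, ho2, ho3, ho4⟩ := ih (n - 1) (by omega) y htoty (by omega) hXy
      refine ⟨o, Relation.ReflTransGen.head hstep ho1, ho2, ?_, ho4⟩
      rw [ho3, step_valC k m w hstep]

/-- the mod-set CRD reverse-robustly decides
`M = {x : Σ wᵢxᵢ ≡ c (mod m)}`: from any configuration bireachable from a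
valid initial configuration, a correct stable configuration is forward-reachable. -/
theorem mod_reverse_robust (hk : 1 ≤ k) (hm : 1 ≤ m) (w : Fin k → ℤ)
    (i : Sp k m → ℕ) (hvalid : ∀ p : ZMod m, i (Sum.inr p) = 0)
    (hinput : 1 ≤ ∑ j : Fin k, i (Sum.inl j))
    (d : Sp k m → ℕ) (hd : Relation.ReflTransGen (BiStep k m (R k m w)) i d) :
    ∃ o : Sp k m → ℕ, Relation.ReflTransGen (Step k m (R k m w)) d o ∧
      ∃ pstar : ZMod m,
        (∀ j : Fin k, o (Sum.inl j) = 0) ∧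
        o (Sum.inr pstar) = 1 ∧ (∀ q : ZMod m, q ≠ pstar → o (Sum.inr q) = 0) ∧
        pstar = ∑ j : Fin k, (w j : ZMod m) * (i (Sum.inl j) : ZMod m) ∧
        (∀ o' : Sp k m → ℕ, Relation.ReflTransGen (Step k m (R k m w)) o o' →
          ∀ q : ZMod m, o' (Sum.inr q) = o (Sum.inr q)) := by
  -- invariants along the bireachability chain
  have hval : valC k m w d = valC k m w i := by
    induction hd with
    | refl => rfl
    | tail _ hstep ih => rw [bistep_valC k m w hstep, ih]
  have htoti : 1 ≤ tot k m i := by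
    have := Fintype.sum_sum_type i
    have : tot k m i = (∑ j : Fin k, i (Sum.inl j)) + ∑ p : ZMod m, i (Sum.inr p) :=
      Fintype.sum_sum_type i
    omega
  have htotd : 1 ≤ tot k m d := by
    clear hval
    induction hd with
    | refl => exact htoti
    | tail _ hstep ih => exact bistep_tot k m w hstep ih
  -- phase 1: clear the X's
  obtain ⟨o1, ho1, hX1, hv1, ht1⟩ := clearX k m w (∑ j : Fin k, d (Sum.inl j)) d rfl
  -- phase 2: merge the Y's
  obtain ⟨o, ho2, hX, hv2, ht⟩ := mergeY k m w (tot k m o1) o1 rfl (by omega) hX1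
  have hvo : valC k m w o = valC k m w i := by rw [hv2, hv1, hval]
  -- extract the unique voter
  have hsumY : (∑ p : ZMod m, o (Sum.inr p)) = 1 := by
    have h1 : tot k m o = (∑ j : Fin k, o (Sum.inl j)) + ∑ p : ZMod m, o (Sum.inr p) :=
      Fintype.sum_sum_type o
    have h2 : (∑ j : Fin k, o (Sum.inl j)) = 0 := Finset.sum_eq_zero fun j _ => hX j
    omega
  obtain ⟨p, hp⟩ : ∃ p, 1 ≤ o (Sum.inr p) := by
    by_contra hc
    push_neg at hc
    have : (∑ p : ZMod m, o (Sum.inr p)) = 0 :=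
      Finset.sum_eq_zero fun p _ => by have := hc p; omega
    omega
  have hsplit : o (Sum.inr p) + ∑ q ∈ Finset.univ.erase p, o (Sum.inr q) = 1 := by
    rw [Finset.add_sum_erase Finset.univ (fun q => o (Sum.inr q)) (Finset.mem_univ p)]
    exact hsumY
  have hop : o (Sum.inr p) = 1 := by omega
  have hrest : ∀ q : ZMod m, q ≠ p → o (Sum.inr q) = 0 := by
    intro q hq
    have hzero : (∑ q ∈ Finset.univ.erase p, o (Sum.inr q)) = 0 := by omega
    exact (Finset.sum_eq_zero_iff.mp hzero) q (Finset.mem_erase.mpr ⟨hq, Finset.mem_univ q⟩)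
  -- identify pstar
  have hvoc : valC k m w o = p := by
    have h2 : (∑ q : ZMod m, (q : ZMod m) * (o (Sum.inr q) : ZMod m)) = p := by
      rw [Finset.sum_eq_single p]
      · rw [hop]; simp
      · intro q _ hq; rw [hrest q hq]; simp
      · intro h; exact absurd (Finset.mem_univ p) h
    simp [valC, hX, h2]
  have hvic : valC k m w i = ∑ j : Fin k, (w j : ZMod m) * (i (Sum.inl j) : ZMod m) := by
    simp [valC, hvalid]
  -- stability
  have nostep : ∀ y, ¬ Step k m (R k m w) o y := by
    rintro y ⟨r, hr, hle, _⟩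
    rcases (mem_R_iff k m w r).mp hr with ⟨j, rfl⟩ | ⟨p', q', rfl⟩
    · have := hle (Sum.inl j)
      simp [single, hX j] at this
    · by_cases h : p' = q'
      · subst h
        have := hle (Sum.inr p')
        simp [single] at this
        by_cases hpp : p' = p
        · subst hpp; omega
        · rw [hrest p' hpp] at this; omega
      · have h1 := hle (Sum.inr p')
        have h2 := hle (Sum.inr q')
        simp [single, h, Ne.symm h] at h1 h2
        by_cases hpp : p' = p
        · subst hpp
          rw [hrest q' (Ne.symm h)] at h2
          omega
        · rw [hrest p' hpp] at h1; omega
  have hstable : ∀ o', Relation.ReflTransGen (Step k m (R k m w)) o o' → o' = o := by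
    intro o' h
    induction h with
    | refl => rfl
    | tail _ hstep ih => subst ih; exact absurd hstep (nostep _)
  exact ⟨o, ho1.trans ho2, p, hX, hop, hrest, by rw [← hvic, ← hvoc, hvo],
    fun o' h q => by rw [hstable o' h]⟩


end
end

section
/- In the threshold CRD, if configuration o has no X-molecules, exactly one Y^L-molecule Y^L_{p*} with p* = s > 0, possibly some Y^F_q molecules all with q > 0, and no reactions applicable, then the invariant value I(o) = Σ w_i·x_i (inherited from the initial configuration) satisfies Σ w_i·x_i ≥ s > t; hence Y^L_s correctly votes yes for the threshold predicate Σ w_i·x_i ≥ t. -/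
section
variable (k : ℕ)

/-- Species: `Sum.inl i` is input `Xᵢ`; `Sum.inr (false, p)` is `Yᴸ_p`;
`Sum.inr (true, q)` is `Yᶠ_q`. -/
abbrev TSp (k : ℕ) := Fin k ⊕ (Bool × ℤ)

/-- The cutoff `s = max(|w₁|,...,|w_k|,|t|) + 1`. -/
def cutoff (w : Fin k → ℤ) (t : ℤ) : ℤ :=
  (((Finset.univ.sup fun i => (w i).natAbs) ⊔ t.natAbs : ℕ) : ℤ) + 1

/-- The linear invariant of the threshold CRD. -/
noncomputable def Ithr (w : Fin k → ℤ) (t : ℤ) (c : TSp k → ℕ) : ℤ :=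
  (∑ i : Fin k, w i * (c (Sum.inl i) : ℤ)) +
  (∑ p ∈ Finset.Icc (-(cutoff k w t)) (cutoff k w t), p * (c (Sum.inr (false, p)) : ℤ)) +
  (∑ q ∈ Finset.Icc (-(cutoff k w t)) (cutoff k w t), q * (c (Sum.inr (true, q)) : ℤ))

theorem cutoff_pos (w : Fin k → ℤ) (t : ℤ) : 0 < cutoff k w t := by
  unfold cutoff
  positivity

theorem lt_cutoff (w : Fin k → ℤ) (t : ℤ) : t < cutoff k w t := by
  have hmax : t.natAbs ≤ (Finset.univ.sup fun i => (w i).natAbs) ⊔ t.natAbs := le_sup_right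
  have habs : t ≤ t.natAbs := Int.le_natAbs
  unfold cutoff
  omega

theorem cutoff_le_Ithr (w : Fin k → ℤ) (t : ℤ) (o : TSp k → ℕ)
    (hX : ∀ i : Fin k, o (Sum.inl i) = 0)
    (hL : o (Sum.inr (false, cutoff k w t)) = 1)
    (hL' : ∀ p : ℤ, p ≠ cutoff k w t → o (Sum.inr (false, p)) = 0)
    (hF : ∀ q : ℤ, q ≤ 0 → o (Sum.inr (true, q)) = 0) :
    cutoff k w t ≤ Ithr k w t o := by
  set s := cutoff k w t
  have hinput : ∑ i : Fin k, w i * (o (Sum.inl i) : ℤ) = 0 := by simp [hX]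
  have hleader : ∑ p ∈ Finset.Icc (-s) s, p * (o (Sum.inr (false, p)) : ℤ) = s := by
    have hs : s ∈ Finset.Icc (-s) s := by
      simp only [Finset.mem_Icc, le_refl, and_true]
      linarith [cutoff_pos k w t]
    rw [Finset.sum_eq_single_of_mem s hs fun p _ hp => by simp [hL' p hp], hL]
    simp
  have hfollowers : 0 ≤ ∑ q ∈ Finset.Icc (-s) s, q * (o (Sum.inr (true, q)) : ℤ) :=
    Finset.sum_nonneg fun q _ => by
      rcases le_or_gt q 0 with hq | hq
      · simp [hF q hq]
      · positivity
  unfold Ithr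
  linarith

theorem threshold_yes_correct (w : Fin k → ℤ) (t : ℤ)
    (x : Fin k → ℕ) (o : TSp k → ℕ)
    (hI : Ithr k w t o = ∑ i : Fin k, w i * (x i : ℤ))
    (hX : ∀ i : Fin k, o (Sum.inl i) = 0)
    (hL : o (Sum.inr (false, cutoff k w t)) = 1)
    (hL' : ∀ p : ℤ, p ≠ cutoff k w t → o (Sum.inr (false, p)) = 0)
    (hF : ∀ q : ℤ, q ≤ 0 → o (Sum.inr (true, q)) = 0) :
    cutoff k w t ≤ ∑ i : Fin k, w i * (x i : ℤ) ∧ t < cutoff k w t :=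
  ⟨hI ▸ cutoff_le_Ithr k w t o hX hL hL' hF, lt_cutoff k w t⟩

end
end
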